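/- arXiv:1603.08828 — 3 statements merged into one kernel-verified Lean document; each statement's English description precedes it below -/
import Mathlib

section
/- Let Y be a solution on an interval (l,u) of dY = a(Y)dB + φ(Y)dt where a > 0 and φ satisfy (1/2)a²a'' + a'φ + (r - φ')a = 0, and suppose f(x) := ∫_c^x 1/a(y) dy is finite for all x ∈ (l,u). Then R := f(Y) satisfies dR = dB + (rR + d)dt for some constant d ∈ ℝ; equivalently, the function y ↦ φ(f⁻¹(y))/a(f⁻¹(y)) - (1/2)a'(f⁻¹(y)) has constant derivative equal to r. -/
open Topology

/-! The substitution `y = f(x)` has `dx/dy = a(x)`, so by the chain rule `G'(f x) = a(x) · H'(x)`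
for `H = φ/a - a'/2`. The quotient rule gives `a² H' = φ' a - φ a' - a² a''/2`, which the ODE
turns into `r a`; hence `G' = a · r/a = r`. The inverse-function step only needs `f` to be
strictly differentiable with derivative `1/a ≠ 0`, and this holds because `1/a` is continuous. -/

theorem hasDerivAt_integral_of_continuousOn {g : ℝ → ℝ} {s : Set ℝ} {c x : ℝ}
    (hs : IsOpen s) (hs' : s.OrdConnected) (hg : ContinuousOn g s) (hc : c ∈ s) (hx : x ∈ s) :
    HasDerivAt (fun x => ∫ y in c..x, g y) (g x) x :=
  intervalIntegral.integral_hasDerivAt_right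
    ((hg.mono (hs'.uIcc_subset hc hx)).intervalIntegrable)
    (hg.stronglyMeasurableAtFilter hs x hx) (hg.continuousAt (hs.mem_nhds hx))

theorem hasStrictDerivAt_of_eqOn_integral {f g : ℝ → ℝ} {s : Set ℝ} {c x : ℝ}
    (hs : IsOpen s) (hs' : s.OrdConnected) (hg : ContinuousOn g s) (hc : c ∈ s)
    (hf : ∀ x ∈ s, f x = ∫ y in c..x, g y) (hx : x ∈ s) :
    HasStrictDerivAt f (g x) x := by
  have hderiv : ∀ᶠ z in 𝓝 x, HasDerivAt f (g z) z := by
    filter_upwards [hs.mem_nhds hx] with z hz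
    refine (hasDerivAt_integral_of_continuousOn hs hs' hg hc hz).congr_of_eventuallyEq ?_
    filter_upwards [hs.mem_nhds hz] with w hw using hf w hw
  exact hasStrictDerivAt_of_hasDerivAt_of_continuousAt hderiv (hg.continuousAt (hs.mem_nhds hx))

/-- The drift of `R = f(Y)`, written in the original coordinate `x = f⁻¹(R)`. -/
noncomputable def drift (a φ : ℝ → ℝ) (x : ℝ) : ℝ :=
  φ x / a x - (1 / 2) * deriv a x

theorem hasDerivAt_drift {a φ : ℝ → ℝ} {r x : ℝ} (hax : a x ≠ 0)
    (ha : DifferentiableAt ℝ a x) (ha' : DifferentiableAt ℝ (deriv a) x)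
    (hφ : DifferentiableAt ℝ φ x)
    (hode : (1 / 2) * (a x) ^ 2 * deriv (deriv a) x + deriv a x * φ x
      + (r - deriv φ x) * a x = 0) :
    HasDerivAt (drift a φ) (r / a x) x := by
  have hquot : HasDerivAt (drift a φ)
      ((deriv φ x * a x - φ x * deriv a x) / a x ^ 2 - 1 / 2 * deriv (deriv a) x) x :=
    (hφ.hasDerivAt.div ha.hasDerivAt hax).sub (ha'.hasDerivAt.const_mul (1 / 2 : ℝ))
  convert hquot using 1
  field_simp
  linear_combination 2 * hode

theorem stmt_5_general (r l u c : ℝ)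
    (hc : c ∈ Set.Ioo l u)
    (a φ : ℝ → ℝ)
    (ha_pos : ∀ x ∈ Set.Ioo l u, 0 < a x)
    (ha : ContDiffOn ℝ 2 a (Set.Ioo l u))
    (hφ : ContDiffOn ℝ 1 φ (Set.Ioo l u))
    (hode : ∀ x ∈ Set.Ioo l u,
      (1 / 2) * (a x) ^ 2 * deriv (deriv a) x + deriv a x * φ x
        + (r - deriv φ x) * a x = 0)
    (f : ℝ → ℝ) (hf : ∀ x ∈ Set.Ioo l u, f x = ∫ y in c..x, 1 / a y)
    (finv : ℝ → ℝ) (hfinv : ∀ x ∈ Set.Ioo l u, finv (f x) = x) :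
    ∀ x ∈ Set.Ioo l u,
      HasDerivAt (fun y => φ (finv y) / a (finv y) - (1 / 2) * deriv a (finv y))
        r (f x) := by
  intro x hx
  have hx_nhds : Set.Ioo l u ∈ 𝓝 x := isOpen_Ioo.mem_nhds hx
  have hax : a x ≠ 0 := (ha_pos x hx).ne'
  have hf' : HasStrictDerivAt f (1 / a x) x :=
    hasStrictDerivAt_of_eqOn_integral isOpen_Ioo Set.ordConnected_Ioo
      (continuousOn_const.div ha.continuousOn fun z hz => (ha_pos z hz).ne') hc hf hx
  have hfinv' : HasStrictDerivAt finv (1 / a x)⁻¹ (f x) :=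
    hf'.to_local_left_inverse (by simpa using hax) (Filter.eventually_of_mem hx_nhds hfinv)
  have ha_diff : DifferentiableAt ℝ a x := (ha.contDiffAt hx_nhds).differentiableAt (by norm_num)
  have ha'_diff : DifferentiableAt ℝ (deriv a) x :=
    ((ha.deriv_of_isOpen (m := 1) isOpen_Ioo (by norm_num)).contDiffAt hx_nhds).differentiableAt
      (by norm_num)
  have hφ_diff : DifferentiableAt ℝ φ x :=
    (hφ.contDiffAt hx_nhds).differentiableAt (by norm_num)
  have hdrift : HasDerivAt (drift a φ) (r / a x) (finv (f x)) := by
    rw [hfinv x hx]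
    exact hasDerivAt_drift hax ha_diff ha'_diff hφ_diff (hode x hx)
  have hcomp := hdrift.comp (f x) hfinv'.hasDerivAt
  rwa [one_div, inv_inv, div_mul_cancel₀ r hax] at hcomp

/-- Deterministic core of the reduction to an Ornstein-Uhlenbeck process:
if `a > 0` and `φ` satisfy `(1/2)a²a'' + a'φ + (r-φ')a = 0` on `(l,u)` and
`f(x) = ∫_c^x dy/a(y)`, then the drift `G(y) = φ(f⁻¹(y))/a(f⁻¹(y)) -
(1/2)a'(f⁻¹(y))` of `R = f(Y)` has derivative `r`, i.e. `G(y) = ry + d`. -/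
theorem stmt_5 (r l u c : ℝ) (hr : 0 < r) (hlu : l < u)
    (hc : c ∈ Set.Ioo l u)
    (a φ : ℝ → ℝ)
    (ha_pos : ∀ x ∈ Set.Ioo l u, 0 < a x)
    (ha : ContDiffOn ℝ 2 a (Set.Ioo l u))
    (hφ : ContDiffOn ℝ 1 φ (Set.Ioo l u))
    (hode : ∀ x ∈ Set.Ioo l u,
      (1 / 2) * (a x) ^ 2 * deriv (deriv a) x + deriv a x * φ x
        + (r - deriv φ x) * a x = 0)
    (f : ℝ → ℝ) (hf : ∀ x ∈ Set.Ioo l u, f x = ∫ y in c..x, 1 / a y)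
    (finv : ℝ → ℝ) (hfinv : ∀ x ∈ Set.Ioo l u, finv (f x) = x) :
    ∀ x ∈ Set.Ioo l u,
      HasDerivAt (fun y => φ (finv y) / a (finv y) - (1 / 2) * deriv a (finv y))
        r (f x) :=
  stmt_5_general r l u c hc a φ ha_pos ha hφ hode f hf finv hfinv
end

section
/- If h(t,x) = v and a ≡ a(x), φ, σ smooth with h three times differentiable in x, then the two conditions a J' = h - v and (1/2)a²J'' + J'φ - rJ = 0 for all v imply the pair of equations (1/2)a²h'' + h'φ = 0 and (1/2)a²a'' + a'φ + (r - φ')a = 0. -/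
/-!
Substituting the first-order condition `J' = g / a` into the Bellman equation expresses `r J`
through `g`, `a`, `φ` and their derivatives; differentiating once more and using `J' = g / a`
again gives, with `g = h - v`,
`a ((1/2)a²h'' + h'φ) = (h - v) ((1/2)a²a'' + a'φ + (r - φ')a)`.
The left side does not depend on `v`, so both brackets vanish.
-/

lemma eq_zero_and_eq_zero_of_forall_mul_eq_sub_mul {R : Type*} [CommRing R] [NoZeroDivisors R]
    {c A b B : R} (hc : c ≠ 0) (h : ∀ v, c * A = (b - v) * B) : A = 0 ∧ B = 0 := by
  have hA : A = 0 := by simpa [hc] using h b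
  refine ⟨hA, ?_⟩
  simpa [hA] using (h (b - 1)).symm

lemma sq_mul_deriv_deriv_of_deriv_eq_div {J g a : ℝ → ℝ} (hJ : ∀ x, deriv J x = g x / a x)
    {x : ℝ} (hg : DifferentiableAt ℝ g x) (ha : DifferentiableAt ℝ a x) (ha0 : a x ≠ 0) :
    a x ^ 2 * deriv (deriv J) x = deriv g x * a x - g x * deriv a x := by
  rw [funext hJ, deriv_fun_div hg ha ha0]
  field_simp

lemma hasDerivAt_bellman_rhs {g a φ : ℝ → ℝ} {x : ℝ}
    (hg : DifferentiableAt ℝ g x) (hg' : DifferentiableAt ℝ (deriv g) x)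
    (ha : DifferentiableAt ℝ a x) (ha' : DifferentiableAt ℝ (deriv a) x) (ha0 : a x ≠ 0)
    (hφ : DifferentiableAt ℝ φ x) :
    HasDerivAt (fun y => (1 / 2) * (deriv g y * a y - g y * deriv a y) + g y * φ y / a y)
      ((1 / 2) * (deriv (deriv g) x * a x - g x * deriv (deriv a) x)
        + ((deriv g x * φ x + g x * deriv φ x) * a x - g x * φ x * deriv a x) / a x ^ 2) x := by
  have hlin := ((hg'.hasDerivAt.mul ha.hasDerivAt).sub
    (hg.hasDerivAt.mul ha'.hasDerivAt)).const_mul (1 / 2)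
  have hfrac := (hg.hasDerivAt.mul hφ.hasDerivAt).div ha.hasDerivAt ha0
  exact (hlin.add hfrac).congr_deriv (by simp only [Pi.mul_apply]; ring)

theorem mul_generator_eq_of_bellman {r : ℝ} (hr : r ≠ 0) {a φ g J : ℝ → ℝ}
    (ha0 : ∀ x, a x ≠ 0) (ha : Differentiable ℝ a) (ha' : Differentiable ℝ (deriv a))
    (hφ : Differentiable ℝ φ) (hg : Differentiable ℝ g) (hg' : Differentiable ℝ (deriv g))
    (hfoc : ∀ x, deriv J x = g x / a x)
    (hbellman : ∀ x, (1 / 2) * a x ^ 2 * deriv (deriv J) x + deriv J x * φ x - r * J x = 0)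
    (x : ℝ) :
    a x * ((1 / 2) * a x ^ 2 * deriv (deriv g) x + deriv g x * φ x)
      = g x * ((1 / 2) * a x ^ 2 * deriv (deriv a) x + deriv a x * φ x
        + (r - deriv φ x) * a x) := by
  have hJ : J = fun y =>
      ((1 / 2) * (deriv g y * a y - g y * deriv a y) + g y * φ y / a y) / r := by
    funext y
    rw [eq_div_iff hr, ← sq_mul_deriv_deriv_of_deriv_eq_div hfoc (hg y) (ha y) (ha0 y)]
    linear_combination -hbellman y + φ y * hfoc y
  have hax := ha0 x
  have hderiv := hfoc x
  rw [hJ, deriv_div_const, (hasDerivAt_bellman_rhs (hg x) (hg' x) (ha x) (ha' x) hax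
    (hφ x)).deriv] at hderiv
  field_simp at hderiv
  linear_combination (1 / 2) * hderiv

theorem stmt_6_general (r : ℝ) (hr : 0 < r)
    (a φ h : ℝ → ℝ) (J : ℝ → ℝ → ℝ)
    (ha_pos : ∀ x, 0 < a x)
    (ha : ContDiff ℝ 2 a) (hφ : ContDiff ℝ 1 φ) (hh : ContDiff ℝ 3 h)
    (hfoc : ∀ v x, deriv (J v) x = (h x - v) / a x)
    (hbellman : ∀ v x, (1 / 2) * (a x) ^ 2 * deriv (deriv (J v)) x
      + deriv (J v) x * φ x - r * J v x = 0) :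
    (∀ x, (1 / 2) * (a x) ^ 2 * deriv (deriv h) x + deriv h x * φ x = 0) ∧
    (∀ x, (1 / 2) * (a x) ^ 2 * deriv (deriv a) x + deriv a x * φ x
      + (r - deriv φ x) * a x = 0) := by
  have ha0 : ∀ x, a x ≠ 0 := fun x => (ha_pos x).ne'
  have hh2 : ContDiff ℝ 2 h := hh.of_le (by norm_num)
  have hkey : ∀ v x, a x * ((1 / 2) * a x ^ 2 * deriv (deriv h) x + deriv h x * φ x)
      = (h x - v) * ((1 / 2) * a x ^ 2 * deriv (deriv a) x + deriv a x * φ x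
        + (r - deriv φ x) * a x) := by
    intro v x
    have hg' : Differentiable ℝ (deriv fun y => h y - v) := by
      rw [deriv_sub_const_fun]
      exact hh2.differentiable_deriv_two
    simpa only [deriv_sub_const_fun] using
      mul_generator_eq_of_bellman hr.ne' ha0 (ha.differentiable two_ne_zero)
        ha.differentiable_deriv_two (hφ.differentiable one_ne_zero)
        ((hh2.differentiable two_ne_zero).sub_const v) hg' (hfoc v) (hbellman v) x
  have hcoeff x := eq_zero_and_eq_zero_of_forall_mul_eq_sub_mul (ha0 x) (hkey · x)
  exact ⟨fun x => (hcoeff x).1, fun x => (hcoeff x).2⟩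

/-- In the time-homogeneous setting, if for every `v` the value function `J v`
satisfies the first-order condition `a J' = h - v` and the Bellman equation
`(1/2)a²J'' + J'φ - rJ = 0`, then (matching coefficients in `v`) the pricing
rule and the coefficients satisfy `(1/2)a²h'' + h'φ = 0` and
`(1/2)a²a'' + a'φ + (r-φ')a = 0`. -/
theorem stmt_6 (r : ℝ) (hr : 0 < r)
    (a φ h : ℝ → ℝ) (J : ℝ → ℝ → ℝ)
    (ha_pos : ∀ x, 0 < a x)
    (ha : ContDiff ℝ 2 a) (hφ : ContDiff ℝ 1 φ) (hh : ContDiff ℝ 3 h)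
    (hJ : ∀ v, ContDiff ℝ 2 (J v))
    (hfoc : ∀ v x, deriv (J v) x = (h x - v) / a x)
    (hbellman : ∀ v x, (1 / 2) * (a x) ^ 2 * deriv (deriv (J v)) x
      + deriv (J v) x * φ x - r * J v x = 0) :
    (∀ x, (1 / 2) * (a x) ^ 2 * deriv (deriv h) x + deriv h x * φ x = 0) ∧
    (∀ x, (1 / 2) * (a x) ^ 2 * deriv (deriv a) x + deriv a x * φ x
      + (r - deriv φ x) * a x = 0) :=
  stmt_6_general r hr a φ h J ha_pos ha hφ hh hfoc hbellman
end

section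
/- Let s(x) be the normal CDF s(x) = sqrt(r/π)∫_{-∞}^x e^{-r(y+d/r)²}dy and define J(x) = ∫_{s⁻¹(v)}^x (s(y)-v)dy for v ∈ {0,1} (interpreting s⁻¹(0) = -∞, s⁻¹(1) = +∞ so that J(x) = ∫_{-∞}^x s(y)dy when v=0 and J(x) = ∫_x^∞ (1-s(y))dy when v=1). Then (A^v J - rJ)(x) = (1_{v=1} s'(x)/s(x) - 1_{v=0} s'(x)/(1-s(x)))(s(x)-v) ≤ 0, where A^v = (1/2)d²/dx² + (rx + d + 1_{v=1}s'/s - 1_{v=0}s'/(1-s))d/dx. -/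
open MeasureTheory Real Filter Set Topology

/-!
`s` is the CDF of the normal law with mean `-d/r` and variance `1/(2r)`, so its density satisfies
`s'' = -2 (r x + d) s'`. Hence `F_v = s'/2 + (r x + d)(s - v)` is a primitive of `r (s - v)`;
the Gaussian tails make `F_0` vanish at `-∞`, so `r J = F_v` for `v = 0`, and the reflection
`1 - s_d(x) = s_{-d}(-x)` turns the case `v = 1` into the case `v = 0`. With `J = F_v / r`,
`J' = s - v` and `J'' = s'`, the Ornstein–Uhlenbeck part `J''/2 + (r x + d) J' - r J` vanishes
identically, and only the `h`-transform drift term remains; its sign comes from `0 < s < 1`.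
-/

noncomputable def gaussPDF (r d y : ℝ) : ℝ := √(r / π) * exp (-(r * (y + d / r) ^ 2))

noncomputable def gaussCDF (r d x : ℝ) : ℝ := ∫ y in Iic x, gaussPDF r d y

noncomputable def cdfPrimitive (r d v x : ℝ) : ℝ :=
  gaussPDF r d x / 2 + (r * x + d) * (gaussCDF r d x - v)

lemma tendsto_mul_exp_atBot_nhds_zero : Tendsto (fun x : ℝ => x * exp x) atBot (𝓝 0) := by
  have h := ((tendsto_pow_mul_exp_neg_atTop_nhds_zero 1).comp tendsto_neg_atBot_atTop).neg
  simpa using h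

lemma ite_div_sub_ite_div_mul_sub_nonpos {v p q : ℝ} (hv : v = 0 ∨ v = 1) (hp : 0 ≤ p)
    (hq₀ : 0 < q) (hq₁ : q < 1) :
    ((if v = 1 then p / q else 0) - (if v = 0 then p / (1 - q) else 0)) * (q - v) ≤ 0 := by
  rcases hv with rfl | rfl
  · simp only [zero_ne_one, ↓reduceIte, zero_sub, sub_zero, neg_mul, Left.neg_nonpos_iff]
    have hq : 0 < 1 - q := sub_pos.2 hq₁
    positivity
  · simp only [↓reduceIte, one_ne_zero, sub_zero]
    exact mul_nonpos_of_nonneg_of_nonpos (by positivity) (by linarith)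

section Gaussian

variable {r : ℝ} (d : ℝ)

lemma gaussPDF_pos (hr : 0 < r) (y : ℝ) : 0 < gaussPDF r d y := by
  unfold gaussPDF; positivity

lemma gaussPDF_neg (y : ℝ) : gaussPDF r (-d) (-y) = gaussPDF r d y := by
  unfold gaussPDF; ring_nf

lemma integrable_gaussPDF (hr : 0 < r) : Integrable (gaussPDF r d) := by
  have h := ((integrable_exp_neg_mul_sq hr).comp_add_right (d / r)).const_mul √(r / π)
  simp only [neg_mul] at h
  exact h

lemma integral_gaussPDF (hr : 0 < r) : ∫ y, gaussPDF r d y = 1 := by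
  have h := integral_gaussian r
  simp only [neg_mul] at h
  simp only [gaussPDF]
  rw [integral_const_mul, integral_add_right_eq_self (fun y => exp (-(r * y ^ 2))) (d / r), h,
    ← sqrt_mul (by positivity), show r / π * (π / r) = 1 by field_simp, sqrt_one]

lemma hasDerivAt_gaussPDF (hr : 0 < r) (y : ℝ) :
    HasDerivAt (gaussPDF r d) (-(2 * (r * y + d)) * gaussPDF r d y) y := by
  have h :=
    ((((hasDerivAt_id' y).add_const (d / r)).pow 2).const_mul r).neg.exp.const_mul √(r / π)
  refine h.congr_deriv ?_
  have e : r * (y + d / r) = r * y + d := by field_simp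
  simp only [gaussPDF, Pi.neg_apply, Pi.pow_apply, Nat.cast_ofNat, Nat.add_one_sub_one, pow_one]
  linear_combination (-2 * √(r / π) * exp (-(r * (y + d / r) ^ 2))) * e

lemma neg_mul_sq_le (hr : 0 < r) (u : ℝ) : -(r * u ^ 2) ≤ 1 / (4 * r) + u := by
  have h : 1 / (4 * r) + u - -(r * u ^ 2) = (2 * r * u + 1) ^ 2 / (4 * r) := by
    field_simp
    ring
  linarith [h ▸ (by positivity : 0 ≤ (2 * r * u + 1) ^ 2 / (4 * r))]

lemma gaussPDF_le (hr : 0 < r) (y : ℝ) :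
    gaussPDF r d y ≤ √(r / π) * exp (1 / (4 * r) + d / r) * exp y := by
  rw [mul_assoc, ← exp_add, gaussPDF]
  gcongr
  linarith [neg_mul_sq_le hr (y + d / r)]

lemma hasDerivAt_gaussCDF (hr : 0 < r) (x : ℝ) :
    HasDerivAt (gaussCDF r d) (gaussPDF r d x) x := by
  have hint := integrable_gaussPDF d hr
  have hcont : Continuous (gaussPDF r d) := by unfold gaussPDF; fun_prop
  have h : gaussCDF r d =
      fun x => (∫ y in Iic 0, gaussPDF r d y) + ∫ y in (0)..x, gaussPDF r d y := by
    funext x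
    rw [gaussCDF, ← intervalIntegral.integral_Iic_sub_Iic hint.integrableOn hint.integrableOn]
    ring
  rw [h]
  exact (intervalIntegral.integral_hasDerivAt_right hint.intervalIntegrable
    (hcont.stronglyMeasurableAtFilter _ _) hcont.continuousAt).const_add _

lemma gaussCDF_pos (hr : 0 < r) (x : ℝ) : 0 < gaussCDF r d x := by
  refine (setIntegral_pos_iff_support_of_nonneg_ae (.of_forall fun y => (gaussPDF_pos d hr y).le)
    (integrable_gaussPDF d hr).integrableOn).2 ?_
  rw [Function.support_eq_univ fun y => (gaussPDF_pos d hr y).ne', univ_inter]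
  simp

lemma one_sub_gaussCDF (hr : 0 < r) (x : ℝ) : 1 - gaussCDF r d x = gaussCDF r (-d) (-x) := by
  have hint := integrable_gaussPDF d hr
  rw [← integral_gaussPDF d hr,
    ← intervalIntegral.integral_Iic_add_Ioi hint.integrableOn hint.integrableOn,
    gaussCDF, add_sub_cancel_left, gaussCDF]
  simp_rw [← gaussPDF_neg d]
  exact integral_comp_neg_Ioi x (gaussPDF r (-d))

lemma gaussCDF_lt_one (hr : 0 < r) (x : ℝ) : gaussCDF r d x < 1 := by
  linarith [one_sub_gaussCDF d hr x, gaussCDF_pos (-d) hr (-x)]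

lemma gaussCDF_le (hr : 0 < r) (x : ℝ) :
    gaussCDF r d x ≤ √(r / π) * exp (1 / (4 * r) + d / r) * exp x := by
  calc gaussCDF r d x
      ≤ ∫ y in Iic x, √(r / π) * exp (1 / (4 * r) + d / r) * exp y :=
        setIntegral_mono_on (integrable_gaussPDF d hr).integrableOn
          ((integrableOn_exp_Iic x).const_mul _) measurableSet_Iic fun y _ => gaussPDF_le d hr y
    _ = √(r / π) * exp (1 / (4 * r) + d / r) * exp x := by
        rw [integral_const_mul, integral_exp_Iic]

lemma continuous_gaussCDF (hr : 0 < r) : Continuous (gaussCDF r d) :=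
  continuous_iff_continuousAt.2 fun x => (hasDerivAt_gaussCDF d hr x).continuousAt

lemma integrableOn_gaussCDF_Iic (hr : 0 < r) (x : ℝ) : IntegrableOn (gaussCDF r d) (Iic x) := by
  refine ((integrableOn_exp_Iic x).const_mul (√(r / π) * exp (1 / (4 * r) + d / r))).mono'
    (continuous_gaussCDF d hr).aestronglyMeasurable.restrict (.of_forall fun y => ?_)
  rw [norm_of_nonneg (gaussCDF_pos d hr y).le]
  exact gaussCDF_le d hr y

lemma hasDerivAt_cdfPrimitive (hr : 0 < r) (v x : ℝ) :
    HasDerivAt (cdfPrimitive r d v) (r * (gaussCDF r d x - v)) x := by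
  have h := ((hasDerivAt_gaussPDF d hr x).div_const 2).add
    ((((hasDerivAt_id' x).const_mul r).add_const d).mul
      ((hasDerivAt_gaussCDF d hr x).sub_const v))
  exact h.congr_deriv (by ring)

lemma tendsto_cdfPrimitive_zero_atBot (hr : 0 < r) :
    Tendsto (cdfPrimitive r d 0) atBot (𝓝 0) := by
  set K := √(r / π) * exp (1 / (4 * r) + d / r)
  have hK : 0 < K := by positivity
  have hexp : Tendsto (fun y => K * exp y) atBot (𝓝 0) := by
    simpa using tendsto_exp_atBot.const_mul K
  have hlin : Tendsto (fun y => |K * ((r * y + d) * exp y)|) atBot (𝓝 0) := by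
    have h := (((tendsto_mul_exp_atBot_nhds_zero.const_mul r).add
      (tendsto_exp_atBot.const_mul d)).const_mul K).abs
    simp only [mul_zero, add_zero, abs_zero] at h
    exact h.congr fun y => by ring_nf
  have hpdf : Tendsto (gaussPDF r d) atBot (𝓝 0) :=
    squeeze_zero (fun y => (gaussPDF_pos d hr y).le) (gaussPDF_le d hr) hexp
  have hcdf : Tendsto (fun y => (r * y + d) * gaussCDF r d y) atBot (𝓝 0) := by
    refine squeeze_zero_norm (fun y => ?_) hlin
    calc ‖(r * y + d) * gaussCDF r d y‖ = |r * y + d| * gaussCDF r d y := by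
          rw [norm_mul, norm_eq_abs, norm_of_nonneg (gaussCDF_pos d hr y).le]
      _ ≤ |r * y + d| * (K * exp y) := by gcongr; exact gaussCDF_le d hr y
      _ = |K * ((r * y + d) * exp y)| := by
          rw [abs_mul K, abs_of_pos hK, abs_mul, abs_of_pos (exp_pos y)]; ring
  have h := (hpdf.div_const 2).add hcdf
  rw [zero_div, add_zero] at h
  exact h.congr fun y => by simp [cdfPrimitive]

lemma cdfPrimitive_one (hr : 0 < r) (x : ℝ) :
    cdfPrimitive r d 1 x = cdfPrimitive r (-d) 0 (-x) := by
  rw [cdfPrimitive, cdfPrimitive, gaussPDF_neg, ← one_sub_gaussCDF d hr]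
  ring

lemma mul_integral_Iic_gaussCDF (hr : 0 < r) (x : ℝ) :
    r * ∫ y in Iic x, gaussCDF r d y = cdfPrimitive r d 0 x := by
  rw [← integral_const_mul, integral_Iic_of_hasDerivAt_of_tendsto'
    (fun y _ => by simpa using hasDerivAt_cdfPrimitive d hr 0 y)
    ((integrableOn_gaussCDF_Iic d hr x).const_mul r) (tendsto_cdfPrimitive_zero_atBot d hr),
    sub_zero]

lemma mul_integral_Ici_one_sub_gaussCDF (hr : 0 < r) (x : ℝ) :
    r * ∫ y in Ici x, (1 - gaussCDF r d y) = cdfPrimitive r d 1 x := by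
  simp_rw [one_sub_gaussCDF d hr]
  rw [integral_Ici_eq_integral_Ioi, integral_comp_neg_Ioi x (gaussCDF r (-d)),
    mul_integral_Iic_gaussCDF (-d) hr, cdfPrimitive_one d hr]

end Gaussian

/-- For `v ∈ {0,1}` the value function `J` (with `J(x) = ∫_{-∞}^x s(y) dy` for
`v = 0` and `J(x) = ∫_x^∞ (1-s(y)) dy` for `v = 1`) is `r`-excessive for the
`h`-transformed OU generator:
`A^v J - rJ = (1_{v=1} s'/s - 1_{v=0} s'/(1-s))(s - v) ≤ 0`, where
`A^v = (1/2)d²/dx² + (rx + d + 1_{v=1}s'/s - 1_{v=0}s'/(1-s))d/dx`. -/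
theorem stmt_19 (r d v : ℝ) (hr : 0 < r) (hv : v = 0 ∨ v = 1)
    (s : ℝ → ℝ)
    (hs : ∀ x, s x = Real.sqrt (r / Real.pi) *
      ∫ y in Set.Iic x, Real.exp (-(r * (y + d / r) ^ 2)))
    (J : ℝ → ℝ)
    (hJ : ∀ x, J x = if v = 1 then ∫ y in Set.Ici x, (1 - s y)
      else ∫ y in Set.Iic x, s y) :
    ∀ x,
      (1 / 2) * deriv (deriv J) x
        + (r * x + d + (if v = 1 then deriv s x / s x else 0)
            - (if v = 0 then deriv s x / (1 - s x) else 0)) * deriv J x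
        - r * J x
      = ((if v = 1 then deriv s x / s x else 0)
          - (if v = 0 then deriv s x / (1 - s x) else 0)) * (s x - v) ∧
      ((if v = 1 then deriv s x / s x else 0)
          - (if v = 0 then deriv s x / (1 - s x) else 0)) * (s x - v) ≤ 0 := by
  have hs' : s = gaussCDF r d := funext fun x => by rw [hs, gaussCDF, ← integral_const_mul]; rfl
  subst hs'
  have hJ_eq : J = fun x => cdfPrimitive r d v x / r := by
    funext x
    rw [hJ x, eq_div_iff hr.ne', mul_comm]
    rcases hv with rfl | rfl
    · rw [if_neg zero_ne_one, mul_integral_Iic_gaussCDF d hr]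
    · rw [if_pos rfl, mul_integral_Ici_one_sub_gaussCDF d hr]
  have hJ' : deriv J = fun x => gaussCDF r d x - v := by
    funext x
    rw [hJ_eq, ((hasDerivAt_cdfPrimitive d hr v x).div_const r).deriv]
    field_simp
  intro x
  have hJ'' : deriv (deriv J) x = gaussPDF r d x := by
    rw [hJ']
    exact ((hasDerivAt_gaussCDF d hr x).sub_const v).deriv
  rw [hJ'', hJ', hJ_eq, (hasDerivAt_gaussCDF d hr x).deriv]
  refine ⟨?_, ite_div_sub_ite_div_mul_sub_nonpos hv (gaussPDF_pos d hr x).le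
    (gaussCDF_pos d hr x) (gaussCDF_lt_one d hr x)⟩
  unfold cdfPrimitive
  field_simp
  ring
end
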